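/- For every integer n ≥ 1 and every k : ZMod n such that both k and 1 - k are units of ZMod n, the composite manipulation F := S ∘ T ∘ S ∘ T⁻¹ ∘ S satisfies F (Z k) = Z (1 - k); i.e. on SPT levels the duality F acts as the Möbius transformation k ↦ 1 - k. -/
import Mathlib


/-!
Torus partition functions of (1+1)d theories with ℤ_n×ℤ_n symmetry,
modeled as functions `GG n × GG n → ℂ` where `GG n := ZMod n × ZMod n`
records the holonomies of each ℤ_n background gauge field around the
two cycles of the torus.
-/

noncomputable section

/-- The holonomy group of one ℤ_n background gauge field on the torus. -/
abbrev GG (n : ℕ) := ZMod n × ZMod n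

/-- The intersection pairing `ε a b = a₁ b₂ - a₂ b₁`. -/
def epsPair {n : ℕ} (a b : GG n) : ZMod n := a.1 * b.2 - a.2 * b.1

/-- The character `e x = exp(2πi x.val / n)`. -/
def eChar (n : ℕ) (x : ZMod n) : ℂ :=
  Complex.exp (2 * Real.pi * Complex.I * (x.val : ℂ) / n)

/-- The gauging operation `S` on torus partition functions. -/
def gaugeS (n : ℕ) [NeZero n] (f : GG n × GG n → ℂ) : GG n × GG n → ℂ :=
  fun P => (n : ℂ)⁻¹ * (n : ℂ)⁻¹ *
    ∑ a : GG n, ∑ b : GG n, f (a, b) * eChar n (epsPair a P.2 + epsPair b P.1)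

/-- The SPT-stacking operation `T` on torus partition functions. -/
def stackT (n : ℕ) (f : GG n × GG n → ℂ) : GG n × GG n → ℂ :=
  fun P => f P * eChar n (epsPair P.1 P.2)

/-- The inverse SPT-stacking operation `T⁻¹` on torus partition functions. -/
def stackTinv (n : ℕ) (f : GG n × GG n → ℂ) : GG n × GG n → ℂ :=
  fun P => f P * eChar n (-(epsPair P.1 P.2))

/-- The torus partition function of the level-`k` ℤ_n×ℤ_n SPT phase. -/
def Zspt (n : ℕ) (k : ZMod n) : GG n × GG n → ℂ :=
  fun P => eChar n (k * epsPair P.1 P.2)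

lemma eChar_eq (n : ℕ) [NeZero n] (x : ZMod n) : eChar n x = ZMod.stdAddChar x := by
  rw [ZMod.stdAddChar_apply, ZMod.toCircle_apply, eChar]

lemma eChar_add (n : ℕ) [NeZero n] (x y : ZMod n) :
    eChar n (x + y) = eChar n x * eChar n y := by
  simp only [eChar_eq, AddChar.map_add_eq_mul]

lemma sum_eChar_mul (n : ℕ) [NeZero n] (c : ZMod n) :
    ∑ x : ZMod n, eChar n (x * c) = if c = 0 then (n : ℂ) else 0 := by
  classical
  simp only [eChar_eq]
  simpa [ZMod.card] using AddChar.sum_mulShift c (ZMod.isPrimitive_stdAddChar n)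

lemma gaugeS_Zspt (n : ℕ) [NeZero n] (k m : ZMod n) (hkm : k * m = 1) :
    gaugeS n (Zspt n k) = Zspt n m := by
  classical
  funext P
  obtain ⟨⟨A1, A2⟩, ⟨B1, B2⟩⟩ := P
  simp only [gaugeS, Zspt, epsPair]
  have key : ∀ a b : GG n,
      eChar n (k * (a.1 * b.2 - a.2 * b.1)) *
        eChar n ((a.1 * B2 - a.2 * B1) + (b.1 * A2 - b.2 * A1)) =
      eChar n (a.1 * (k * b.2 + B2)) *
        (eChar n (a.2 * (-(k * b.1 + B1))) * eChar n (b.1 * A2 - b.2 * A1)) := by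
    intro a b
    rw [← eChar_add, ← eChar_add, ← eChar_add]
    congr 1
    ring
  rw [Finset.sum_comm]
  have hinner : ∀ b : GG n,
      ∑ a : GG n, eChar n (k * (a.1 * b.2 - a.2 * b.1)) *
        eChar n ((a.1 * B2 - a.2 * B1) + (b.1 * A2 - b.2 * A1)) =
      (if k * b.2 + B2 = 0 then (n : ℂ) else 0) *
        ((if -(k * b.1 + B1) = 0 then (n : ℂ) else 0) * eChar n (b.1 * A2 - b.2 * A1)) := by
    intro b
    calc ∑ a : GG n, eChar n (k * (a.1 * b.2 - a.2 * b.1)) *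
          eChar n ((a.1 * B2 - a.2 * B1) + (b.1 * A2 - b.2 * A1))
        = ∑ a1 : ZMod n, ∑ a2 : ZMod n, eChar n (a1 * (k * b.2 + B2)) *
            (eChar n (a2 * (-(k * b.1 + B1))) * eChar n (b.1 * A2 - b.2 * A1)) := by
          rw [Fintype.sum_prod_type]
          exact Finset.sum_congr rfl fun a1 _ => Finset.sum_congr rfl fun a2 _ => key (a1, a2) b
      _ = (∑ a1 : ZMod n, eChar n (a1 * (k * b.2 + B2))) *
            ((∑ a2 : ZMod n, eChar n (a2 * (-(k * b.1 + B1)))) *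
              eChar n (b.1 * A2 - b.2 * A1)) := by
          rw [Finset.sum_mul]
          refine Finset.sum_congr rfl fun a1 _ => ?_
          rw [Finset.sum_mul, Finset.mul_sum]
      _ = _ := by rw [sum_eChar_mul, sum_eChar_mul]
  rw [Finset.sum_congr rfl fun b _ => hinner b]
  have hc2 : ∀ x c : ZMod n, (k * x + c = 0) ↔ (x = -(m * c)) := by
    intro x c
    constructor
    · intro h; linear_combination m * h - x * hkm
    · intro h; linear_combination k * h - c * hkm
  have hc1 : ∀ x c : ZMod n, (-(k * x + c) = 0) ↔ (x = -(m * c)) := by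
    intro x c
    rw [neg_eq_zero]; exact hc2 x c
  simp only [hc2, hc1]
  rw [Fintype.sum_prod_type]
  simp only [ite_mul, zero_mul, mul_ite, mul_zero]
  have step : ∀ x : ZMod n,
      (∑ x1 : ZMod n, if x = -(m * B1) then
          (if x1 = -(m * B2) then (n : ℂ) * ((n : ℂ) * eChar n (x * A2 - x1 * A1)) else 0)
        else 0) =
      if x = -(m * B1) then
        (n : ℂ) * ((n : ℂ) * eChar n (x * A2 - (-(m * B2)) * A1)) else 0 := by
    intro x
    split_ifs with h
    · simp [Finset.sum_ite_eq']
    · simp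
  rw [Finset.sum_congr rfl fun x _ => step x]
  simp only [Finset.sum_ite_eq', Finset.mem_univ, if_true]
  have hn : (n : ℂ) ≠ 0 := Nat.cast_ne_zero.mpr (NeZero.ne n)
  have harg : -(m * B1) * A2 - -(m * B2) * A1 = m * (A1 * B2 - A2 * B1) := by ring
  rw [harg]
  field_simp

lemma stackT_Zspt (n : ℕ) [NeZero n] (k : ZMod n) :
    stackT n (Zspt n k) = Zspt n (k + 1) := by
  funext P
  simp only [stackT, Zspt, ← eChar_add]
  congr 1
  ring

lemma stackTinv_Zspt (n : ℕ) [NeZero n] (k : ZMod n) :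
    stackTinv n (Zspt n k) = Zspt n (k - 1) := by
  funext P
  simp only [stackTinv, Zspt, ← eChar_add]
  congr 1
  ring

/-- for `k` with both `k` and `1 - k` units of `ZMod n`, the
composite manipulation `F = S ∘ T ∘ S ∘ T⁻¹ ∘ S` acts on SPT levels as the
Möbius transformation `k ↦ 1 - k`. -/
theorem F_on_SPT_levels (n : ℕ) [NeZero n] (k : ZMod n)
    (hk : IsUnit k) (hk' : IsUnit (1 - k)) :
    (gaugeS n ∘ stackT n ∘ gaugeS n ∘ stackTinv n ∘ gaugeS n) (Zspt n k) =
      Zspt n (1 - k) := by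

  obtain ⟨u, hu⟩ := hk
  obtain ⟨v, hv⟩ := hk'
  set m1 : ZMod n := (↑u⁻¹ : ZMod n) with hm1
  set m2 : ZMod n := (↑v⁻¹ : ZMod n) with hm2
  have h1 : k * m1 = 1 := by rw [← hu, hm1]; exact_mod_cast u.mul_inv
  have h2 : (1 - k) * m2 = 1 := by rw [← hv, hm2]; exact_mod_cast v.mul_inv
  simp only [Function.comp_apply]
  rw [gaugeS_Zspt n k m1 h1, stackTinv_Zspt,
      gaugeS_Zspt n (m1 - 1) (k * m2) (by linear_combination m2 * h1 + h2),
      stackT_Zspt,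
      gaugeS_Zspt n (k * m2 + 1) (1 - k) (by linear_combination k * h2)]

end
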